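/- arXiv:1609.04588 — 4 statements merged into one kernel-verified Lean document; each statement's English description precedes it below -/
import Mathlib

section
/- (Divergence Borel–Cantelli / Chung–Erdős inequality) Let X be a compact set in ℝ^d and μ a finite Borel measure on X. Let (E_n) be a sequence of μ-measurable subsets of X with ∑_{n=1}^∞ μ(E_n) = ∞. Then μ(limsup_n E_n) ≥ limsup_{Q→∞} (∑_{n=1}^Q μ(E_n))² / (∑_{n,m=1}^Q μ(E_n ∩ E_m)). -/
/-!
Let `f = ∑_{n ∈ s} 1_{E_n}`. Cauchy–Schwarz on `⋃_{n ∈ s} E_n`, the support of `f`, gives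
`(∑ μ(E_n))² = (∫ f)² ≤ μ(⋃ E_n) · ∫ f² = μ(⋃ E_n) · ∑∑ μ(E_n ∩ E_m)`.
Applied to the tail `s = [N, Q]`, whose sum `T_Q` diverges, this bounds the ratio at `Q` by
`(1 + C_N / T_Q)² μ(⋃_{n ≥ N} E_n)`, where `C_N` is the finite contribution of the indices
below `N`. Letting `Q → ∞` and then `N → ∞` (continuity from above) gives the claim.
-/

open MeasureTheory Set Filter Topology ENNReal

theorem Finset.sum_le_sum_add_sum_of_subset_union {ι M : Type*} [DecidableEq ι]
    [AddCommMonoid M] [PartialOrder M] [CanonicallyOrderedAdd M] {s t u : Finset ι}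
    (h : s ⊆ t ∪ u) (f : ι → M) :
    ∑ i ∈ s, f i ≤ ∑ i ∈ t, f i + ∑ i ∈ u, f i :=
  calc ∑ i ∈ s, f i ≤ ∑ i ∈ t ∪ u, f i := Finset.sum_le_sum_of_subset h
    _ ≤ ∑ i ∈ t ∪ u, f i + ∑ i ∈ t ∩ u, f i := le_self_add
    _ = ∑ i ∈ t, f i + ∑ i ∈ u, f i := Finset.sum_union_inter

theorem sq_lintegral_le_measure_univ_mul_lintegral_sq {α : Type*} [MeasurableSpace α]
    {μ : Measure α} {f : α → ℝ≥0∞} (hf : AEMeasurable f μ) :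
    (∫⁻ x, f x ∂μ) ^ 2 ≤ μ univ * ∫⁻ x, f x ^ 2 ∂μ := by
  have h := ENNReal.lintegral_mul_le_Lp_mul_Lq μ Real.HolderConjugate.two_two
    (f := fun _ => 1) aemeasurable_const hf
  simp only [Pi.mul_apply, one_mul, one_pow, lintegral_const, rpow_two] at h
  calc (∫⁻ x, f x ∂μ) ^ 2
      ≤ (μ univ ^ (1 / 2 : ℝ) * (∫⁻ x, f x ^ 2 ∂μ) ^ (1 / 2 : ℝ)) ^ 2 := by gcongr
    _ = μ univ * ∫⁻ x, f x ^ 2 ∂μ := by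
      rw [mul_pow, ← rpow_natCast, ← rpow_natCast, ← rpow_mul, ← rpow_mul]
      norm_num

theorem sq_sum_measure_le_measure_biUnion_mul_sum_sum_inter {α ι : Type*}
    [MeasurableSpace α] (μ : Measure α) {E : ι → Set α} (hE : ∀ n, MeasurableSet (E n))
    (s : Finset ι) :
    (∑ n ∈ s, μ (E n)) ^ 2 ≤ μ (⋃ n ∈ s, E n) * ∑ n ∈ s, ∑ m ∈ s, μ (E n ∩ E m) := by
  set f : α → ℝ≥0∞ := fun x => ∑ n ∈ s, (E n).indicator 1 x
  have hf : Measurable f := Finset.measurable_sum s fun n _ => measurable_one.indicator (hE n)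
  have hint : ∫⁻ x, f x ∂μ = ∑ n ∈ s, μ (E n) := by
    rw [lintegral_finsetSum _ fun n _ => measurable_one.indicator (hE n)]
    simp [lintegral_indicator_one (hE _)]
  have hint_sq : ∫⁻ x, f x ^ 2 ∂μ = ∑ n ∈ s, ∑ m ∈ s, μ (E n ∩ E m) := by
    have hpt : ∀ x, f x ^ 2 = ∑ n ∈ s, ∑ m ∈ s, (E n ∩ E m).indicator 1 x := fun x => by
      simp only [f, sq, Finset.sum_mul_sum, inter_indicator_one, Pi.mul_apply]
    simp_rw [hpt]
    rw [lintegral_finsetSum _ fun n _ => Finset.measurable_sum s fun m _ =>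
      measurable_one.indicator ((hE n).inter (hE m))]
    simp_rw [lintegral_finsetSum _ fun m _ => measurable_one.indicator ((hE _).inter (hE m))]
    simp [lintegral_indicator_one ((hE _).inter (hE _))]
  have hsupp : Function.support f ⊆ ⋃ n ∈ s, E n := by
    intro x hx
    obtain ⟨n, hn, hxn⟩ := Finset.exists_ne_zero_of_sum_ne_zero hx
    exact mem_biUnion hn (mem_of_indicator_ne_zero hxn)
  calc (∑ n ∈ s, μ (E n)) ^ 2 = (∫⁻ x in ⋃ n ∈ s, E n, f x ∂μ) ^ 2 := by
        rw [setLIntegral_eq_of_support_subset hsupp, hint]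
    _ ≤ μ (⋃ n ∈ s, E n) * ∫⁻ x in ⋃ n ∈ s, E n, f x ^ 2 ∂μ := by
        simpa using
          sq_lintegral_le_measure_univ_mul_lintegral_sq (μ := μ.restrict _) hf.aemeasurable
    _ ≤ μ (⋃ n ∈ s, E n) * ∑ n ∈ s, ∑ m ∈ s, μ (E n ∩ E m) := by
        rw [← hint_sq]
        exact mul_le_mul_right (setLIntegral_le_lintegral _ _) _

theorem tendsto_sum_Icc_atTop_nhds_top {f : ℕ → ℝ≥0∞} (hf : ∑' n, f n = ⊤)
    (hfin : ∀ n, f n ≠ ⊤) (N : ℕ) : Tendsto (fun Q => ∑ n ∈ Finset.Icc N Q, f n) atTop (𝓝 ⊤) := by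
  have hhead : ∑ n ∈ Finset.range N, f n ≠ ⊤ := sum_ne_top.2 fun n _ => hfin n
  have hpartial :
      Tendsto (fun Q => ∑ n ∈ Finset.range (Q + 1), f n - ∑ n ∈ Finset.range N, f n)
        atTop (𝓝 ⊤) := by
    simpa [hf, top_sub hhead] using ENNReal.Tendsto.sub ((ENNReal.tendsto_nat_tsum f).comp
      (tendsto_add_atTop_nat 1)) tendsto_const_nhds (Or.inr hhead)
  refine tendsto_nhds_top_mono' hpartial fun Q => tsub_le_iff_left.2 ?_
  refine Finset.sum_le_sum_add_sum_of_subset_union (fun n hn => ?_) f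
  simp only [Finset.mem_range, Finset.mem_union, Finset.mem_Icc] at hn ⊢
  omega

theorem sq_div_le_one_add_div_sq_mul {A C T u D : ℝ≥0∞} (hA : A ≤ C + T) (hT₀ : T ≠ 0)
    (hT : T ≠ ⊤) (hTD : T ^ 2 ≤ u * D) : A ^ 2 / D ≤ (1 + C / T) ^ 2 * u := by
  refine ENNReal.div_le_of_le_mul ?_
  calc A ^ 2 ≤ ((1 + C / T) * T) ^ 2 := by
        rw [add_mul, one_mul, ENNReal.div_mul_cancel hT₀ hT, add_comm]; gcongr
    _ = (1 + C / T) ^ 2 * T ^ 2 := mul_pow _ _ _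
    _ ≤ (1 + C / T) ^ 2 * u * D := by rw [mul_assoc]; gcongr

theorem tendsto_one_add_div_sq_mul {ι : Type*} {l : Filter ι} {C : ℝ≥0∞} (hC : C ≠ ⊤)
    {T : ι → ℝ≥0∞} (hT : Tendsto T l (𝓝 ⊤)) (u : ℝ≥0∞) :
    Tendsto (fun i => (1 + C / T i) ^ 2 * u) l (𝓝 u) := by
  have hCT : Tendsto (fun i => C / T i) l (𝓝 0) := by
    simpa [div_eq_mul_inv] using ENNReal.Tendsto.const_mul (tendsto_inv_iff.2 hT) (Or.inr hC)
  have hsq : Tendsto (fun i => (1 + C / T i) ^ 2) l (𝓝 1) := by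
    simpa using ENNReal.Tendsto.pow (n := 2) (hCT.const_add 1)
  simpa using ENNReal.Tendsto.mul_const hsq (Or.inl one_ne_zero)

theorem limsup_sq_sum_div_sum_inter_le_measure_iUnion_ge {α : Type*} [MeasurableSpace α]
    (μ : Measure α) [IsFiniteMeasure μ] {E : ℕ → Set α} (hE : ∀ n, MeasurableSet (E n))
    (hdiv : ∑' n, μ (E n) = ⊤) {N : ℕ} (hN : 1 ≤ N) :
    atTop.limsup (fun Q : ℕ => (∑ n ∈ Finset.Icc 1 Q, μ (E n)) ^ 2 /
        ∑ n ∈ Finset.Icc 1 Q, ∑ m ∈ Finset.Icc 1 Q, μ (E n ∩ E m))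
      ≤ μ (⋃ n, ⋃ (_ : N ≤ n), E n) := by
  have hfin : ∀ n, μ (E n) ≠ ⊤ := fun n => measure_ne_top μ _
  set C := ∑ n ∈ Finset.range N, μ (E n)
  set T := fun Q => ∑ n ∈ Finset.Icc N Q, μ (E n)
  set u := μ (⋃ n, ⋃ (_ : N ≤ n), E n)
  have hC : C ≠ ⊤ := sum_ne_top.2 fun n _ => hfin n
  have hT : Tendsto T atTop (𝓝 ⊤) := tendsto_sum_Icc_atTop_nhds_top hdiv hfin N
  have hbound : ∀ᶠ Q in atTop, (∑ n ∈ Finset.Icc 1 Q, μ (E n)) ^ 2 /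
      ∑ n ∈ Finset.Icc 1 Q, ∑ m ∈ Finset.Icc 1 Q, μ (E n ∩ E m) ≤ (1 + C / T Q) ^ 2 * u := by
    filter_upwards [hT.eventually_ne top_ne_zero] with Q hT₀
    have hsub : Finset.Icc N Q ⊆ Finset.Icc 1 Q := Finset.Icc_subset_Icc_left hN
    refine sq_div_le_one_add_div_sq_mul ?_ hT₀ (sum_ne_top.2 fun n _ => hfin n) ?_
    · refine Finset.sum_le_sum_add_sum_of_subset_union (fun n hn => ?_) _
      simp only [Finset.mem_range, Finset.mem_union, Finset.mem_Icc] at hn ⊢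
      omega
    · refine (sq_sum_measure_le_measure_biUnion_mul_sum_sum_inter μ hE _).trans ?_
      gcongr
      · exact measure_mono <| iUnion₂_subset fun n hn =>
          subset_iUnion₂ (s := fun n (_ : N ≤ n) => E n) n (Finset.mem_Icc.1 hn).1
      · exact (Finset.sum_le_sum fun n _ => Finset.sum_le_sum_of_subset hsub).trans
          (Finset.sum_le_sum_of_subset hsub)
  calc _ ≤ atTop.limsup (fun Q => (1 + C / T Q) ^ 2 * u) := limsup_le_limsup hbound
    _ = u := (tendsto_one_add_div_sq_mul hC hT u).limsup_eq

theorem stmt_2_general (d : ℕ)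
    (μ : Measure (EuclideanSpace ℝ (Fin d))) [IsFiniteMeasure μ]
    (E : ℕ → Set (EuclideanSpace ℝ (Fin d)))
    (hmeas : ∀ n, MeasurableSet (E n))
    (hdiv : ∑' n, μ (E n) = ⊤) :
    Filter.atTop.limsup (fun Q : ℕ =>
        (∑ n ∈ Finset.Icc 1 Q, μ (E n)) ^ 2 /
          ∑ n ∈ Finset.Icc 1 Q, ∑ m ∈ Finset.Icc 1 Q, μ (E n ∩ E m))
      ≤ μ (⋂ N : ℕ, ⋃ n : ℕ, ⋃ (_ : N ≤ n), E n) := by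
  have hanti : Antitone fun N => ⋃ n : ℕ, ⋃ (_ : N ≤ n), E n := fun _ _ hNM =>
    biUnion_mono (fun _ hn => hNM.trans hn) fun _ _ => subset_rfl
  rw [hanti.measure_iInter (fun N => (MeasurableSet.biUnion (to_countable _)
    fun n _ => hmeas n).nullMeasurableSet) ⟨0, measure_ne_top μ _⟩]
  refine le_iInf fun N => ?_
  calc _ ≤ μ (⋃ n : ℕ, ⋃ (_ : N + 1 ≤ n), E n) :=
        limsup_sq_sum_div_sum_inter_le_measure_iUnion_ge μ hmeas hdiv (Nat.le_add_left 1 N)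
    _ ≤ μ (⋃ n : ℕ, ⋃ (_ : N ≤ n), E n) := measure_mono (hanti N.le_succ)

/-- Chung–Erdős / divergence Borel–Cantelli: if `∑ μ(E_n) = ∞` then
`μ(limsup E_n) ≥ limsup_Q (∑_{n=1}^Q μ(E_n))² / ∑_{n,m=1}^Q μ(E_n ∩ E_m)`. -/
theorem stmt_2 (d : ℕ) (X : Set (EuclideanSpace ℝ (Fin d))) (hX : IsCompact X)
    (μ : Measure (EuclideanSpace ℝ (Fin d))) [IsFiniteMeasure μ]
    (E : ℕ → Set (EuclideanSpace ℝ (Fin d))) (hE : ∀ n, E n ⊆ X)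
    (hmeas : ∀ n, MeasurableSet (E n))
    (hdiv : ∑' n, μ (E n) = ⊤) :
    Filter.atTop.limsup (fun Q : ℕ =>
        (∑ n ∈ Finset.Icc 1 Q, μ (E n)) ^ 2 /
          ∑ n ∈ Finset.Icc 1 Q, ∑ m ∈ Finset.Icc 1 Q, μ (E n ∩ E m))
      ≤ μ (⋂ N : ℕ, ⋃ n : ℕ, ⋃ (_ : N ≤ n), E n) :=
  stmt_2_general d μ E hmeas hdiv
end

section
/- Let Φ = {φ₁, φ₂} with φ₁(x) = 3x/4 and φ₂(x) = x/4 + 3/4, whose attractor is [0,1]. Let W := {x ∈ [0,1] : |x − φ_I(0)| ≤ 2^{-|I|} for infinitely many finite words I over {1,2}}. Then W has Lebesgue measure zero, even though ∑_{n=1}^∞ ∑_{I ∈ {1,2}^n} 2^{-n} = ∞. -/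
open MeasureTheory Set

/-- The IFS of Example 1: `φ₁(x) = 3x/4`, `φ₂(x) = x/4 + 3/4` (attractor `[0,1]`). -/
noncomputable def phiA : Fin 2 → ℝ → ℝ := fun i x => if i = 0 then 3 * x / 4 else x / 4 + 3 / 4

/-- `φ_I = φ_{i₁} ∘ ⋯ ∘ φ_{i_n}` for a word `I = (i₁,…,i_n)`. -/
noncomputable def wordApplyA : List (Fin 2) → ℝ → ℝ :=
  fun I => I.foldr (fun i g => phiA i ∘ g) id

namespace Stmt7

/-- contraction ratios -/
noncomputable def rr : Fin 2 → ℝ := fun i => if i = 0 then 3 / 4 else 1 / 4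

/-- translations -/
noncomputable def tt : Fin 2 → ℝ := fun i => if i = 0 then 0 else 3 / 4

/-- length of the interval of the word `I` -/
noncomputable def Lw (I : List (Fin 2)) : ℝ := (I.map rr).prod

/-- left endpoint of the interval of the word `I` -/
noncomputable def cw (I : List (Fin 2)) : ℝ := wordApplyA I 0

lemma wordApplyA_nil (x : ℝ) : wordApplyA [] x = x := rfl

lemma wordApplyA_cons (i : Fin 2) (I : List (Fin 2)) (x : ℝ) :
    wordApplyA (i :: I) x = phiA i (wordApplyA I x) := rfl

lemma phiA_eq (i : Fin 2) (x : ℝ) : phiA i x = rr i * x + tt i := by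
  fin_cases i <;> simp [phiA, rr, tt] <;> ring

lemma rr_pos (i : Fin 2) : 0 < rr i := by fin_cases i <;> norm_num [rr]

lemma tt_nonneg (i : Fin 2) : 0 ≤ tt i := by fin_cases i <;> norm_num [tt]

lemma Lw_nil : Lw [] = 1 := by simp [Lw]

lemma cw_nil : cw [] = 0 := rfl

lemma Lw_cons (i : Fin 2) (I : List (Fin 2)) : Lw (i :: I) = rr i * Lw I := by
  simp [Lw]

lemma cw_cons (i : Fin 2) (I : List (Fin 2)) : cw (i :: I) = rr i * cw I + tt i := by
  simp only [cw, wordApplyA_cons, phiA_eq]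

lemma Lw_pos (I : List (Fin 2)) : 0 < Lw I := by
  induction I with
  | nil => simp [Lw_nil]
  | cons i I ih => rw [Lw_cons]; exact mul_pos (rr_pos i) ih

lemma cw_nonneg (I : List (Fin 2)) : 0 ≤ cw I := by
  induction I with
  | nil => simp [cw_nil]
  | cons i I ih =>
    rw [cw_cons]
    have := rr_pos i
    have := tt_nonneg i
    nlinarith

lemma cw_add_Lw_le_one (I : List (Fin 2)) : cw I + Lw I ≤ 1 := by
  induction I with
  | nil => simp [cw_nil, Lw_nil]
  | cons i I ih =>
    rw [cw_cons, Lw_cons]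
    fin_cases i <;> simp only [rr, tt] <;> norm_num <;> nlinarith [Lw_pos I, cw_nonneg I]

lemma cw_le_one (I : List (Fin 2)) : cw I ≤ 1 := by
  nlinarith [cw_add_Lw_le_one I, Lw_pos I]

/-- the intervals of words of length `n` cover `[0,1]` -/
lemma cover (n : ℕ) : ∀ x : ℝ, 0 ≤ x → x ≤ 1 →
    ∃ I : List (Fin 2), I.length = n ∧ cw I ≤ x ∧ x ≤ cw I + Lw I := by
  induction n with
  | zero =>
    intro x hx hx'
    exact ⟨[], rfl, by simpa [cw_nil], by simp [cw_nil, Lw_nil]; linarith⟩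
  | succ n ih =>
    intro x hx hx'
    by_cases h : x ≤ 3 / 4
    · obtain ⟨I, hlen, h1, h2⟩ := ih (4 * x / 3) (by linarith) (by linarith)
      refine ⟨0 :: I, by simp [hlen], ?_, ?_⟩
      · rw [cw_cons]; simp only [rr, tt]; norm_num; linarith
      · rw [cw_cons, Lw_cons]; simp only [rr, tt]; norm_num; linarith
    · obtain ⟨I, hlen, h1, h2⟩ := ih (4 * x - 3) (by linarith) (by linarith)
      refine ⟨1 :: I, by simp [hlen], ?_, ?_⟩
      · rw [cw_cons]; simp only [rr, tt]; norm_num; linarith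
      · rw [cw_cons, Lw_cons]; simp only [rr, tt]; norm_num; linarith

/-- separation: any level-`n` left endpoint lies outside the open interval of any
level-`n` word. -/
lemma sep : ∀ I J : List (Fin 2), I.length = J.length →
    cw I ≤ cw J ∨ cw J + Lw J ≤ cw I := by
  intro I
  induction I with
  | nil =>
    intro J h
    cases J with
    | nil => exact Or.inl le_rfl
    | cons j J => simp at h
  | cons i I ih =>
    intro J h
    cases J with
    | nil => simp at h
    | cons j J =>
      have hl : I.length = J.length := by simpa using h
      have hIJ := ih J hl
      have h1 := Lw_pos I
      have h2 := Lw_pos J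
      have h3 := cw_nonneg I
      have h4 := cw_nonneg J
      have h5 := cw_add_Lw_le_one I
      have h6 := cw_add_Lw_le_one J
      fin_cases i <;> fin_cases j <;>
        simp only [cw_cons, Lw_cons, rr, tt] <;> norm_num <;>
        rcases hIJ with h7 | h7 <;>
        first
          | (left; linarith)
          | (right; linarith)

/-- the radius at level `n` -/
noncomputable def eps (n : ℕ) : ℝ := (1 / 2 : ℝ) ^ n

lemma eps_nonneg (n : ℕ) : 0 ≤ eps n := by unfold eps; positivity

lemma rpow_eq_eps (n : ℕ) : (2 : ℝ) ^ (-(n : ℝ)) = eps n := by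
  rw [show (-(n : ℝ)) = ((-(n:ℤ) : ℤ) : ℝ) by push_cast; ring, Real.rpow_intCast,
    zpow_neg, zpow_natCast, eps, one_div, inv_pow]

/-- the two end-pieces of the interval of `I`, of width `min (Lw I) e` each -/
noncomputable def Aset (I : List (Fin 2)) (e : ℝ) : Set ℝ :=
  Icc (cw I) (cw I + min (Lw I) e) ∪ Icc (cw I + Lw I - min (Lw I) e) (cw I + Lw I)

lemma mem_Aset {x e : ℝ} (he : 0 ≤ e) {n : ℕ} (I : List (Fin 2)) (hI : I.length = n)
    (hx : x ∈ Icc (0:ℝ) 1) (hxe : |x - cw I| ≤ e) :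
    ∃ J : List (Fin 2), J.length = n ∧ x ∈ Aset J e := by
  obtain ⟨J, hJlen, hJ1, hJ2⟩ := cover n x hx.1 hx.2
  refine ⟨J, hJlen, ?_⟩
  have habs := abs_le.mp hxe
  rcases sep I J (by rw [hI, hJlen]) with h | h
  · left
    have h1 : x - cw J ≤ Lw J := by linarith
    have h2 : x - cw J ≤ e := by linarith [habs.2]
    have h3 : x - cw J ≤ min (Lw J) e := le_min h1 h2
    exact ⟨hJ1, by linarith⟩
  · right
    have h1 : cw J + Lw J - x ≤ Lw J := by linarith
    have h2 : cw J + Lw J - x ≤ e := by linarith [habs.1]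
    have h3 : cw J + Lw J - x ≤ min (Lw J) e := le_min h1 h2
    exact ⟨by linarith, hJ2⟩

lemma volume_Aset (I : List (Fin 2)) {e : ℝ} (he : 0 ≤ e) :
    volume (Aset I e) ≤ ENNReal.ofReal (2 * min (Lw I) e) := by
  have hm : 0 ≤ min (Lw I) e := le_min (Lw_pos I).le he
  calc volume (Aset I e)
      ≤ volume (Icc (cw I) (cw I + min (Lw I) e))
        + volume (Icc (cw I + Lw I - min (Lw I) e) (cw I + Lw I)) := measure_union_le _ _
    _ = ENNReal.ofReal (min (Lw I) e) + ENNReal.ofReal (min (Lw I) e) := by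
        rw [Real.volume_Icc, Real.volume_Icc]
        congr 1 <;> congr 1 <;> ring
    _ = ENNReal.ofReal (2 * min (Lw I) e) := by
        rw [← ENNReal.ofReal_add hm hm]; congr 1; ring

/-- union over all words of length `n` of the end-pieces -/
noncomputable def Fset (n : ℕ) : Set ℝ :=
  ⋃ f : Fin n → Fin 2, Aset (List.ofFn f) (eps n)

lemma mem_Fset {x : ℝ} (hx : x ∈ Icc (0:ℝ) 1) {n : ℕ}
    (h : ∃ I : List (Fin 2), I.length = n ∧ |x - cw I| ≤ eps n) : x ∈ Fset n := by
  obtain ⟨I, hIlen, hxe⟩ := h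
  obtain ⟨J, hJlen, hJ⟩ := mem_Aset (eps_nonneg n) I hIlen hx hxe
  subst hJlen
  exact Set.mem_iUnion.mpr ⟨J.get, by rwa [List.ofFn_get]⟩

lemma Lw_ofFn {n : ℕ} (f : Fin n → Fin 2) : Lw (List.ofFn f) = ∏ i, rr (f i) := by
  rw [Lw, List.map_ofFn, List.prod_ofFn]; rfl

lemma sqrt_prod {ι : Type*} (s : Finset ι) (g : ι → ℝ) (hg : ∀ i, 0 ≤ g i) :
    Real.sqrt (∏ i ∈ s, g i) = ∏ i ∈ s, Real.sqrt (g i) := by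
  induction s using Finset.cons_induction with
  | empty => simp
  | cons a s ha ih => rw [Finset.prod_cons, Finset.prod_cons, Real.sqrt_mul (hg a), ih]

lemma min_le_sqrt {a b : ℝ} (ha : 0 ≤ a) (hb : 0 ≤ b) :
    min a b ≤ Real.sqrt a * Real.sqrt b := by
  rcases le_total a b with h | h
  · rw [min_eq_left h]
    calc a = Real.sqrt a * Real.sqrt a := (Real.mul_self_sqrt ha).symm
      _ ≤ Real.sqrt a * Real.sqrt b :=
        mul_le_mul_of_nonneg_left (Real.sqrt_le_sqrt h) (Real.sqrt_nonneg a)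
  · rw [min_eq_right h]
    calc b = Real.sqrt b * Real.sqrt b := (Real.mul_self_sqrt hb).symm
      _ ≤ Real.sqrt a * Real.sqrt b :=
        mul_le_mul_of_nonneg_right (Real.sqrt_le_sqrt h) (Real.sqrt_nonneg b)

/-- the contraction factor of the covering estimate -/
noncomputable def qq : ℝ := Real.sqrt (1/2) * (Real.sqrt (3/4) + Real.sqrt (1/4))

lemma qq_nonneg : 0 ≤ qq := by unfold qq; positivity

lemma qq_lt_one : qq < 1 := by
  have ha : Real.sqrt (1/2 : ℝ) ^ 2 = 1/2 := Real.sq_sqrt (by norm_num)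
  have hb : Real.sqrt (3/4 : ℝ) ^ 2 = 3/4 := Real.sq_sqrt (by norm_num)
  have hc : Real.sqrt (1/4 : ℝ) ^ 2 = 1/4 := Real.sq_sqrt (by norm_num)
  have ha0 := Real.sqrt_nonneg (1/2 : ℝ)
  have hb0 := Real.sqrt_nonneg (3/4 : ℝ)
  have hc0 := Real.sqrt_nonneg (1/4 : ℝ)
  have hbc : (Real.sqrt (3/4 : ℝ) * Real.sqrt (1/4 : ℝ)) ^ 2 = 3/16 := by
    rw [mul_pow, hb, hc]; norm_num
  have hbc' : Real.sqrt (3/4 : ℝ) * Real.sqrt (1/4 : ℝ) ≤ 7/16 := by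
    nlinarith [sq_nonneg (Real.sqrt (3/4 : ℝ) * Real.sqrt (1/4 : ℝ) - 1/2)]
  have hq2 : qq ^ 2 ≤ 15/16 := by
    unfold qq; nlinarith
  nlinarith [qq_nonneg]

lemma sqrt_eps (n : ℕ) : Real.sqrt (eps n) = Real.sqrt (1/2) ^ n := by
  unfold eps
  induction n with
  | zero => simp
  | succ n ih => rw [pow_succ, pow_succ, Real.sqrt_mul (by positivity), ih]

lemma sum_bound (n : ℕ) :
    ∑ f : Fin n → Fin 2, (2 * min (Lw (List.ofFn f)) (eps n)) ≤ 2 * qq ^ n := by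
  have key : ∀ f : Fin n → Fin 2,
      min (Lw (List.ofFn f)) (eps n) ≤ (∏ i, Real.sqrt (rr (f i))) * Real.sqrt (1/2) ^ n := by
    intro f
    calc min (Lw (List.ofFn f)) (eps n)
        ≤ Real.sqrt (Lw (List.ofFn f)) * Real.sqrt (eps n) :=
          min_le_sqrt (Lw_pos _).le (eps_nonneg n)
      _ = (∏ i, Real.sqrt (rr (f i))) * Real.sqrt (1/2) ^ n := by
          rw [sqrt_eps, Lw_ofFn, sqrt_prod _ _ (fun i => (rr_pos (f i)).le)]
  calc ∑ f : Fin n → Fin 2, (2 * min (Lw (List.ofFn f)) (eps n))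
      ≤ ∑ f : Fin n → Fin 2, 2 * ((∏ i, Real.sqrt (rr (f i))) * Real.sqrt (1/2) ^ n) :=
        Finset.sum_le_sum (fun f _ => by nlinarith [key f])
    _ = 2 * Real.sqrt (1/2) ^ n * ∑ f : Fin n → Fin 2, ∏ i, Real.sqrt (rr (f i)) := by
        rw [Finset.mul_sum]; congr 1; funext f; ring
    _ = 2 * Real.sqrt (1/2) ^ n * (∑ i : Fin 2, Real.sqrt (rr i)) ^ n := by
        rw [Fintype.sum_pow]
    _ = 2 * qq ^ n := by
        rw [show (∑ i : Fin 2, Real.sqrt (rr i)) = Real.sqrt (3/4) + Real.sqrt (1/4) by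
          simp [Fin.sum_univ_two, rr]]
        rw [qq, mul_pow]; ring

lemma volume_Fset (n : ℕ) : volume (Fset n) ≤ ENNReal.ofReal (2 * qq ^ n) := by
  calc volume (Fset n)
      ≤ ∑ f : Fin n → Fin 2, volume (Aset (List.ofFn f) (eps n)) :=
        measure_iUnion_fintype_le _ _
    _ ≤ ∑ f : Fin n → Fin 2, ENNReal.ofReal (2 * min (Lw (List.ofFn f)) (eps n)) :=
        Finset.sum_le_sum (fun f _ => volume_Aset _ (eps_nonneg n))
    _ = ENNReal.ofReal (∑ f : Fin n → Fin 2, 2 * min (Lw (List.ofFn f)) (eps n)) :=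
        (ENNReal.ofReal_sum_of_nonneg (fun f _ =>
          mul_nonneg (by norm_num) (le_min (Lw_pos _).le (eps_nonneg n)))).symm
    _ ≤ ENNReal.ofReal (2 * qq ^ n) := ENNReal.ofReal_le_ofReal (sum_bound n)

lemma tsum_Fset_ne_top : (∑' n, volume (Fset n)) ≠ ⊤ := by
  have hsum : Summable (fun n : ℕ => 2 * qq ^ n) :=
    (summable_geometric_of_lt_one qq_nonneg qq_lt_one).mul_left 2
  have h := calc (∑' n, volume (Fset n))
      ≤ ∑' n, ENNReal.ofReal (2 * qq ^ n) := ENNReal.tsum_le_tsum (fun n => volume_Fset n)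
    _ = ENNReal.ofReal (∑' n, 2 * qq ^ n) :=
        (ENNReal.ofReal_tsum_of_nonneg (fun n =>
          mul_nonneg (by norm_num) (pow_nonneg qq_nonneg n)) hsum).symm
    _ < ⊤ := ENNReal.ofReal_lt_top
  exact h.ne

lemma W_subset :
    {x ∈ Set.Icc (0 : ℝ) 1 |
      {I : List (Fin 2) | |x - wordApplyA I 0| ≤ 2 ^ (-(I.length : ℝ))}.Infinite}
      ⊆ Filter.limsup Fset Filter.atTop := by
  intro x hx
  obtain ⟨hx01, hinf⟩ := hx
  rw [Filter.mem_limsup_iff_frequently_mem, Filter.frequently_atTop]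
  intro N
  have hex : ∃ I ∈ {I : List (Fin 2) | |x - wordApplyA I 0| ≤ 2 ^ (-(I.length : ℝ))},
      N ≤ I.length := by
    by_contra hcon
    push_neg at hcon
    exact hinf ((List.finite_length_le (Fin 2) N).subset (fun I hI => (hcon I hI).le))
  obtain ⟨I, hIS, hIN⟩ := hex
  refine ⟨I.length, hIN, ?_⟩
  apply mem_Fset hx01
  exact ⟨I, rfl, by rw [← rpow_eq_eps]; exact hIS⟩

end Stmt7

/-- although `∑_n ∑_{I ∈ {1,2}^n} 2^{-n} = ∞`, the set
`W = {x ∈ [0,1] : |x − φ_I(0)| ≤ 2^{-|I|} for infinitely many words I}`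
has Lebesgue measure zero. -/
theorem stmt_7 :
    ¬ Summable (fun n : ℕ => ∑ _I : Fin n → Fin 2, (2 : ℝ) ^ (-(n : ℝ))) ∧
    volume {x ∈ Set.Icc (0 : ℝ) 1 |
      {I : List (Fin 2) | |x - wordApplyA I 0| ≤ 2 ^ (-(I.length : ℝ))}.Infinite} = 0 := by
  constructor
  · intro h
    have h1 : (fun n : ℕ => ∑ _I : Fin n → Fin 2, (2 : ℝ) ^ (-(n : ℝ))) = fun _ => (1:ℝ) := by
      funext n
      rw [Finset.sum_const, Finset.card_univ, Fintype.card_fun, Stmt7.rpow_eq_eps,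
        Fintype.card_fin, Fintype.card_fin, nsmul_eq_mul, Stmt7.eps]
      push_cast
      rw [← mul_pow]
      norm_num
    rw [h1] at h
    have h2 := h.tendsto_atTop_zero
    exact one_ne_zero (tendsto_nhds_unique tendsto_const_nhds h2)
  · exact measure_mono_null Stmt7.W_subset
      (MeasureTheory.measure_limsup_atTop_eq_zero Stmt7.tsum_Fset_ne_top)
end

section
/- Let Φ = {φ_i}_{i ∈ 𝒟} be an IFS of contractions on ℝ^d with attractor X, and suppose there is a word Y = (y₁,…,y_N) ∈ 𝒟^N such that the sub-IFS Φ' = {φ_I : I ∈ 𝒟^N, I ≠ Y} satisfies: every point of the attractor X' of Φ' has every coding (over the alphabet 𝒟^N \ {Y}) avoiding the block YY of length 2N. Then every point of φ_{YY}(X') has a coding over 𝒟 that begins with YY and in which YY appears only finitely many times (a 'leading block coding'). -/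
open Set

/-- `φ_I = φ_{i₁} ∘ ⋯ ∘ φ_{i_n}` for a word `I`. -/
def wordApply {α D : Type} (φ : D → α → α) : List D → α → α :=
  fun I => I.foldr (fun i g => φ i ∘ g) id

/-- The block `B` (of length `L`) occurs at position `p` in the sequence `i`. -/
def occursAt {D : Type} (L : ℕ) (B : ℕ → D) (i : ℕ → D) (p : ℕ) : Prop :=
  ∀ j < L, i (p + j) = B j

/-- `i` is a coding of `x` with respect to the IFS `φ` and attractor `X`:
`x ∈ φ_{i₁…i_n}(X)` for all `n`. -/
def IsCoding {d : ℕ} {D : Type}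
    (φ : D → EuclideanSpace ℝ (Fin d) → EuclideanSpace ℝ (Fin d))
    (X : Set (EuclideanSpace ℝ (Fin d))) (i : ℕ → D) (x : EuclideanSpace ℝ (Fin d)) : Prop :=
  ∀ n : ℕ, x ∈ wordApply φ (List.ofFn fun k : Fin n => i k) '' X

/-- `i` is a concatenation of `N`-blocks, each different from `Y`
(a coding over the alphabet `𝒟^N \ {Y}`). -/
def BlockCoding {D : Type} (N : ℕ) (Y : Fin N → D) (i : ℕ → D) : Prop :=
  ∀ t : ℕ, (fun k : Fin N => i (t * N + k)) ≠ Y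

/-- if every point of `X'` has a coding over `𝒟^N \ {Y}` and all such
codings avoid the block `YY`, then every point of `φ_{YY}(X')` has a coding over `𝒟`
beginning with `YY` in which `YY` occurs only finitely many times. -/
theorem stmt_10 (d N : ℕ) (hN : 0 < N) (D : Type) [Fintype D]
    (φ : D → EuclideanSpace ℝ (Fin d) → EuclideanSpace ℝ (Fin d))
    (X X' : Set (EuclideanSpace ℝ (Fin d))) (hX'X : X' ⊆ X)
    (hinv : ∀ i : D, φ i '' X ⊆ X)
    (Y : Fin N → D)
    (YY : ℕ → D) (hYY : ∀ j : ℕ, YY j = Y ⟨j % N, Nat.mod_lt j hN⟩)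
    (hcode : ∀ x ∈ X', ∃ i : ℕ → D, IsCoding φ X i x ∧ BlockCoding N Y i)
    (havoid : ∀ x ∈ X', ∀ i : ℕ → D, IsCoding φ X i x → BlockCoding N Y i →
      ∀ p : ℕ, ¬ occursAt (2 * N) YY i p) :
    ∀ y ∈ wordApply φ (List.ofFn fun k : Fin (2 * N) => YY k) '' X',
      ∃ i : ℕ → D, IsCoding φ X i y ∧ (∀ k < 2 * N, i k = YY k) ∧
        {p : ℕ | occursAt (2 * N) YY i p}.Finite := by
  have wa_append : ∀ (A B : List D) (x : EuclideanSpace ℝ (Fin d)),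
      wordApply φ (A ++ B) x = wordApply φ A (wordApply φ B x) := by
    intro A B x
    induction A with
    | nil => simp [wordApply]
    | cons a A ih => simp [wordApply] at ih ⊢; simp [ih]
  have wa_mem : ∀ (I : List D) (x : EuclideanSpace ℝ (Fin d)), x ∈ X →
      wordApply φ I x ∈ X := by
    intro I
    induction I with
    | nil => intro x hx; simpa [wordApply] using hx
    | cons a I ih =>
      intro x hx
      have : wordApply φ (a :: I) x = φ a (wordApply φ I x) := by simp [wordApply]
      rw [this]
      exact hinv a ⟨_, ih x hx, rfl⟩
  have ofFn_split : ∀ (f : ℕ → D) (m n : ℕ),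
      (List.ofFn fun k : Fin (m + n) => f k) =
        (List.ofFn fun k : Fin m => f k) ++ (List.ofFn fun k : Fin n => f (m + k)) := by
    intro f m n
    apply List.ext_getElem
    · simp
    · intro p h1 h2
      simp only [List.getElem_ofFn]
      rcases lt_or_ge p m with hp | hp
      · rw [List.getElem_append_left (by simpa using hp)]
        simp
      · rw [List.getElem_append_right (by simpa using hp)]
        simp only [List.getElem_ofFn, List.length_ofFn]
        congr 1
        omega
  have ofFn_congr : ∀ (f : ℕ → D) (m n : ℕ), m = n →
      (List.ofFn fun k : Fin m => f k) = (List.ofFn fun k : Fin n => f k) := by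
    rintro f m n rfl; rfl
  rintro y ⟨x', hx', rfl⟩
  obtain ⟨jj, hj, hjB⟩ := hcode x' hx'
  set i : ℕ → D := fun k => if k < 2 * N then YY k else jj (k - 2 * N) with hi
  have hi_lt : ∀ k < 2 * N, i k = YY k := by intro k hk; simp [hi, hk]
  have hi_ge : ∀ k, 2 * N ≤ k → i k = jj (k - 2 * N) := by
    intro k hk; simp [hi, Nat.not_lt.mpr hk]
  refine ⟨i, ?_, hi_lt, ?_⟩
  · intro n
    rcases le_or_gt n (2 * N) with hn | hn
    · -- prefix of YY
      have hx'X : x' ∈ X := hX'X hx'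
      have hsplit : (List.ofFn fun k : Fin (2 * N) => YY k) =
          (List.ofFn fun k : Fin n => YY k) ++
            (List.ofFn fun k : Fin (2 * N - n) => YY (n + k)) := by
        rw [ofFn_congr YY (2 * N) (n + (2 * N - n)) (by omega)]
        exact ofFn_split YY n (2 * N - n)
      have hpre : (List.ofFn fun k : Fin n => i k) = List.ofFn fun k : Fin n => YY k := by
        congr 1
        funext k
        exact hi_lt k (lt_of_lt_of_le k.isLt hn)
      refine ⟨wordApply φ (List.ofFn fun k : Fin (2 * N - n) => YY (n + k)) x',
        wa_mem _ _ hx'X, ?_⟩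
      rw [hpre, ← wa_append, ← hsplit]
    · -- prefix = YY ++ prefix of jj
      obtain ⟨z, hz, hzx⟩ := hj (n - 2 * N)
      have hsplit : (List.ofFn fun k : Fin n => i k) =
          (List.ofFn fun k : Fin (2 * N) => YY k) ++
            (List.ofFn fun k : Fin (n - 2 * N) => jj k) := by
        rw [ofFn_congr i n (2 * N + (n - 2 * N)) (by omega), ofFn_split i (2 * N) (n - 2 * N)]
        congr 1
        · congr 1
          funext k
          exact hi_lt k k.isLt
        · congr 1
          funext k
          rw [hi_ge _ (by omega)]
          congr 1
          omega
      refine ⟨z, hz, ?_⟩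
      rw [hsplit, wa_append, hzx]
  · apply Set.Finite.subset (Set.finite_Iio (2 * N))
    intro p hp
    simp only [Set.mem_Iio]
    by_contra hge
    push_neg at hge
    apply havoid x' hx' jj hj hjB (p - 2 * N)
    intro k hk
    have := hp k hk
    rw [hi_ge (p + k) (by omega)] at this
    rw [show p - 2 * N + k = p + k - 2 * N by omega]
    exact this
end

section
/- Let (z_i) ∈ 𝒟^ℕ and suppose the initial block (z₁,…,z_l) occurs only finitely many times in (z_i). Fix words I ∈ 𝒟^n, J ∈ 𝒟^m with n < m, extensions I_θ = I·(z₁,…,z_p) and J_θ = J·(z₁,…,z_q) with p ≥ m − n + l and q ≥ l, and suppose one of I_θ, J_θ is a prefix of the other. Then (z₁,…,z_l) = (z_{m−n+1},…,z_{m−n+l}), i.e., the block (z₁,…,z_l) occurs at position m − n + 1 in (z_i). -/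
/-- if the initial block `(z₀,…,z_{l−1})` occurs only finitely many times
in `(z_i)`, `I` has length `n`, `J` has length `m > n`, `p ≥ m − n + l`, `q ≥ l`, and one
of `I·(z₀,…,z_{p−1})`, `J·(z₀,…,z_{q−1})` is a prefix of the other, then the block
`(z₀,…,z_{l−1})` occurs at position `m − n` in `(z_i)`. -/
theorem stmt_19 (D : Type) (z : ℕ → D) (l : ℕ)
    (hfin : {p₀ : ℕ | ∀ j < l, z (p₀ + j) = z j}.Finite)
    (n m p q : ℕ) (hnm : n < m)
    (I J : List D) (hI : I.length = n) (hJ : J.length = m)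
    (hp : m - n + l ≤ p) (hq : l ≤ q)
    (hpre :
      (I ++ List.ofFn fun k : Fin p => z k) <+: (J ++ List.ofFn fun k : Fin q => z k) ∨
      (J ++ List.ofFn fun k : Fin q => z k) <+: (I ++ List.ofFn fun k : Fin p => z k)) :
    ∀ j < l, z (m - n + j) = z j := by
  intro j hj
  have hmjA : m + j < (I ++ List.ofFn fun k : Fin p => z k).length := by
    simp [hI]; omega
  have hmjB : m + j < (J ++ List.ofFn fun k : Fin q => z k).length := by
    simp [hJ]; omega
  have hAval : (I ++ List.ofFn fun k : Fin p => z k)[m + j]'hmjA = z (m - n + j) := by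
    rw [List.getElem_append_right (by omega)]
    simp [hI]
    congr 1
    omega
  have hBval : (J ++ List.ofFn fun k : Fin q => z k)[m + j]'hmjB = z j := by
    rw [List.getElem_append_right (by omega)]
    simp [hJ]
  rcases hpre with h | h
  · have := List.IsPrefix.getElem h hmjA
    rw [hAval, hBval] at this
    exact this
  · have := List.IsPrefix.getElem h hmjB
    rw [hAval, hBval] at this
    exact this.symm
end
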